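/- For all Milner expressions e, f, every variable v and every n ∈ ℕ: if e ~^(n) f then μv.e ~^(n) μv.f. Consequently, the recursion operator is nonexpansive for the behavioural distance: bd(μv.e, μv.f) ≤ bd(e, f). -/

import Mathlib

open Classical in
/-- The lifting `d↑` of a distance function on `X` to `Σ × X + V`. -/
noncomputable def distLift {A V X : Type*} (d : X → X → ℝ) :
    ((A × X) ⊕ V) → ((A × X) ⊕ V) → ℝ
  | Sum.inl (a, x), Sum.inl (b, y) => if a = b then (1 / 2) * d x y else 1
  | Sum.inr v, Sum.inr w => if v = w then 0 else 1
  | _, _ => 1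

/-- Supremum of `f` over a finite set, with the convention `sup ∅ = 0`. -/
noncomputable def hSup {Y : Type*} (s : Finset Y) (f : Y → ℝ) : ℝ :=
  if h : s.Nonempty then s.sup' h f else 0

/-- Infimum of `f` over a finite set, with the convention `inf ∅ = 1`. -/
noncomputable def hInf {Y : Type*} (s : Finset Y) (f : Y → ℝ) : ℝ :=
  if h : s.Nonempty then s.inf' h f else 1

/-- Hausdorff lifting of a distance function to finite subsets. -/
noncomputable def hausdorffDist {X : Type*} (d : X → X → ℝ) (s t : Finset X) : ℝ :=
  max (hSup s fun x => hInf t fun y => d x y) (hSup t fun y => hInf s fun x => d y x)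

/-- The map `Φ_β` associated with a prechart `(Q, β)`. -/
noncomputable def Phi {A V Q : Type*} (β : Q → Finset ((A × Q) ⊕ V))
    (d : Q → Q → ℝ) : Q → Q → ℝ :=
  fun q₁ q₂ => hausdorffDist (distLift d) (β q₁) (β q₂)

/-- `d` is a 1-bounded pseudometric on `X`. -/
structure IsBPMet {X : Type*} (d : X → X → ℝ) : Prop where
  nonneg : ∀ x y, 0 ≤ d x y
  le_one : ∀ x y, d x y ≤ 1
  refl : ∀ x, d x x = 0
  symm : ∀ x y, d x y = d y x
  triangle : ∀ x y z, d x z ≤ d x y + d y z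

/-- A bisimulation between two precharts. -/
def IsBisim {A V Q₁ Q₂ : Type*} (β₁ : Q₁ → Finset ((A × Q₁) ⊕ V))
    (β₂ : Q₂ → Finset ((A × Q₂) ⊕ V)) (R : Q₁ → Q₂ → Prop) : Prop :=
  ∀ q₁ q₂, R q₁ q₂ →
    (∀ v : V, Sum.inr v ∈ β₁ q₁ ↔ Sum.inr v ∈ β₂ q₂) ∧
    (∀ (a : A) (q₁' : Q₁), Sum.inl (a, q₁') ∈ β₁ q₁ →
      ∃ q₂', Sum.inl (a, q₂') ∈ β₂ q₂ ∧ R q₁' q₂') ∧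
    (∀ (a : A) (q₂' : Q₂), Sum.inl (a, q₂') ∈ β₂ q₂ →
      ∃ q₁', Sum.inl (a, q₁') ∈ β₁ q₁ ∧ R q₁' q₂')

/-- Bisimilarity of two states of a prechart. -/
def Bisimilar {A V Q : Type*} (β : Q → Finset ((A × Q) ⊕ V)) (q₁ q₂ : Q) : Prop :=
  ∃ R, IsBisim β β R ∧ R q₁ q₂

/-- A prechart homomorphism: a function whose graph is a bisimulation. -/
def IsHom {A V Q₁ Q₂ : Type*} (β₁ : Q₁ → Finset ((A × Q₁) ⊕ V))
    (β₂ : Q₂ → Finset ((A × Q₂) ⊕ V)) (f : Q₁ → Q₂) : Prop :=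
  IsBisim β₁ β₂ fun q₁ q₂ => q₂ = f q₁

/-- Stratification of bisimilarity between two precharts. -/
def Strat2 {A V Q₁ Q₂ : Type*} (β₁ : Q₁ → Finset ((A × Q₁) ⊕ V))
    (β₂ : Q₂ → Finset ((A × Q₂) ⊕ V)) : ℕ → Q₁ → Q₂ → Prop
  | 0 => fun _ _ => True
  | n + 1 => fun q₁ q₂ =>
      (∀ v : V, Sum.inr v ∈ β₁ q₁ ↔ Sum.inr v ∈ β₂ q₂) ∧
      (∀ (a : A) (q₁' : Q₁), Sum.inl (a, q₁') ∈ β₁ q₁ →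
        ∃ q₂', Sum.inl (a, q₂') ∈ β₂ q₂ ∧ Strat2 β₁ β₂ n q₁' q₂') ∧
      (∀ (a : A) (q₂' : Q₂), Sum.inl (a, q₂') ∈ β₂ q₂ →
        ∃ q₁', Sum.inl (a, q₁') ∈ β₁ q₁ ∧ Strat2 β₁ β₂ n q₁' q₂')

/-- Stratification of bisimilarity on a single prechart. -/
def Strat {A V Q : Type*} (β : Q → Finset ((A × Q) ⊕ V)) : ℕ → Q → Q → Prop :=
  Strat2 β β

/-- One-step transition relation of a prechart. -/
def StepRel {A V Q : Type*} (β : Q → Finset ((A × Q) ⊕ V)) (q q' : Q) : Prop :=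
  ∃ a : A, Sum.inl (a, q') ∈ β q

/-- A prechart is locally finite if every state reaches only finitely many states. -/
def LocFinite {A V Q : Type*} (β : Q → Finset ((A × Q) ⊕ V)) : Prop :=
  ∀ q : Q, {q' | Relation.ReflTransGen (StepRel β) q q'}.Finite

/-- `bd` is the least fixpoint of `Φ_β` in the lattice of 1-bounded pseudometrics. -/
def IsLfpDist {A V Q : Type*} (β : Q → Finset ((A × Q) ⊕ V)) (bd : Q → Q → ℝ) : Prop :=
  IsBPMet bd ∧ Phi β bd = bd ∧
    ∀ d : Q → Q → ℝ, IsBPMet d → Phi β d = d → ∀ x y, bd x y ≤ d x y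

open Classical in
/-- The discrete pseudometric, the top element of `D_X`. -/
noncomputable def discreteDist {X : Type*} : X → X → ℝ :=
  fun x y => if x = y then 0 else 1

/-- Iterates `Φ_β^{(p)}` of `Φ_β` starting from the discrete pseudometric. -/
noncomputable def PhiIter {A V Q : Type*} (β : Q → Finset ((A × Q) ⊕ V)) :
    ℕ → Q → Q → ℝ
  | 0 => discreteDist
  | n + 1 => Phi β (PhiIter β n)


/-- Milner expressions over an alphabet `A`, with variables drawn from `ℕ`
(a countably infinite set of variables). -/
inductive Exp (A : Type*) : Type _ where
  | zero : Exp A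
  | var : ℕ → Exp A
  | act : A → Exp A → Exp A
  | plus : Exp A → Exp A → Exp A
  | mu : ℕ → Exp A → Exp A
deriving DecidableEq

namespace Exp

/-- Free variables of an expression. -/
def fv {A : Type*} : Exp A → Finset ℕ
  | .zero => ∅
  | .var v => {v}
  | .act _ e => fv e
  | .plus e f => fv e ∪ fv f
  | .mu v e => (fv e).erase v

/-- A fresh variable not belonging to the given finite set. -/
def freshVar (s : Finset ℕ) : ℕ := s.sup id + 1

/-- Simultaneous capture-avoiding substitution: `subst σ e` substitutes `σ w` for every
free occurrence of each variable `w` in `e`, renaming the bound variable of a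
`μ`-binder whenever it would capture a free variable of a substituted expression. -/
def subst {A : Type*} : (ℕ → Exp A) → Exp A → Exp A
  | _, .zero => .zero
  | σ, .var v => σ v
  | σ, .act a e => .act a (subst σ e)
  | σ, .plus e f => .plus (subst σ e) (subst σ f)
  | σ, .mu v e =>
      let S : Finset ℕ := ((fv e).erase v).biUnion fun w => fv (σ w)
      let v' : ℕ := if v ∈ S then freshVar S else v
      .mu v' (subst (Function.update σ v (.var v')) e)

/-- Substitution of a single expression `t` for the variable `v`. -/
def subst1 {A : Type*} (e : Exp A) (v : ℕ) (t : Exp A) : Exp A :=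
  subst (Function.update Exp.var v t) e
end Exp

section Dest
variable {A : Type*} [DecidableEq A]

/-- Successors contributed by one transition/output of the body of `μv.e`,
where `me = μv.e`. -/
def destStep (v : ℕ) (me : Exp A) : ((A × Exp A) ⊕ ℕ) → Finset ((A × Exp A) ⊕ ℕ)
  | Sum.inl (a, e') => {Sum.inl (a, Exp.subst1 e' v me)}
  | Sum.inr w => if w = v then ∅ else {Sum.inr w}

/-- The prechart structure on Milner expressions, given by the operational rules:
`a.e →a e`; `v ▷ v`; `e + f` inherits the transitions and outputs of `e` and `f`;
`μw.e ▷ v` when `e ▷ v` and `v ≠ w`; `μv.e →a e'[μv.e/v]` whenever `e →a e'`. -/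
def dest : Exp A → Finset ((A × Exp A) ⊕ ℕ)
  | .zero => ∅
  | .var v => {Sum.inr v}
  | .act a e => {Sum.inl (a, e)}
  | .plus e f => dest e ∪ dest f
  | .mu v e => (dest e).biUnion (destStep v (.mu v e))

end Dest

/-!
Unfolding `μv.e →a e'[μv.e/v]` substitutes `μv.e` into the successors of `e`, so `μv` preserves
`~⁽ⁿ⁾` once `~⁽ⁿ⁾` is a congruence for simultaneous substitution. Capture-avoiding substitution
renames binders, so composing two substitutions, or renaming the binder it picks, is only correct
up to `~⁽ⁿ⁾`; these two facts, the substitution congruence, and the `μ` congruence are proved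
together by induction on `n`.

For the distance: on any prechart, `bd q₁ q₂ = inf {2⁻ⁿ | q₁ ~⁽ⁿ⁾ q₂}` (and `1` if that set
is empty), since this function is a fixpoint of `Φ` in `D_Q` and lies below every fixpoint
by induction on the first level at which `q₁` and `q₂` are told apart. Hence `bd` is monotone in
the stratification, and nonexpansiveness of `μv` follows from the first part.
-/

section Prechart

open Sum

variable {A V Q : Type*} {β : Q → Finset ((A × Q) ⊕ V)}

namespace Strat

theorem refl (n : ℕ) (q : Q) : Strat β n q q := by
  induction n generalizing q with
  | zero => trivial
  | succ n ih => exact ⟨fun _ => Iff.rfl, fun _ q' h => ⟨q', h, ih q'⟩, fun _ q' h => ⟨q', h, ih q'⟩⟩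

theorem symm {n : ℕ} {q₁ q₂ : Q} (h : Strat β n q₁ q₂) : Strat β n q₂ q₁ := by
  induction n generalizing q₁ q₂ with
  | zero => trivial
  | succ n ih =>
    obtain ⟨hout, hfwd, hbwd⟩ := h
    refine ⟨fun v => (hout v).symm, fun a q h => ?_, fun a q h => ?_⟩
    · obtain ⟨p, hp, hs⟩ := hbwd a q h
      exact ⟨p, hp, ih hs⟩
    · obtain ⟨p, hp, hs⟩ := hfwd a q h
      exact ⟨p, hp, ih hs⟩

theorem trans {n : ℕ} {q₁ q₂ q₃ : Q} (h₁₂ : Strat β n q₁ q₂) (h₂₃ : Strat β n q₂ q₃) :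
    Strat β n q₁ q₃ := by
  induction n generalizing q₁ q₂ q₃ with
  | zero => trivial
  | succ n ih =>
    obtain ⟨hout, hfwd, hbwd⟩ := h₁₂
    obtain ⟨gout, gfwd, gbwd⟩ := h₂₃
    refine ⟨fun v => (hout v).trans (gout v), fun a q h => ?_, fun a q h => ?_⟩
    · obtain ⟨p, hp, hs⟩ := hfwd a q h
      obtain ⟨r, hr, hs'⟩ := gfwd a p hp
      exact ⟨r, hr, ih hs hs'⟩
    · obtain ⟨p, hp, hs⟩ := gbwd a q h
      obtain ⟨r, hr, hs'⟩ := hbwd a p hp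
      exact ⟨r, hr, ih hs' hs⟩

theorem of_le {m n : ℕ} {q₁ q₂ : Q} (h : Strat β m q₁ q₂) (hnm : n ≤ m) :
    Strat β n q₁ q₂ := by
  induction n generalizing m q₁ q₂ with
  | zero => trivial
  | succ n ih =>
    obtain ⟨m, rfl⟩ : ∃ k, m = k + 1 := ⟨m - 1, by omega⟩
    obtain ⟨hout, hfwd, hbwd⟩ := h
    refine ⟨hout, fun a q h => ?_, fun a q h => ?_⟩
    · obtain ⟨p, hp, hs⟩ := hfwd a q h
      exact ⟨p, hp, ih hs (by omega)⟩
    · obtain ⟨p, hp, hs⟩ := hbwd a q h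
      exact ⟨p, hp, ih hs (by omega)⟩

theorem update {ι : Type*} [DecidableEq ι] {n : ℕ} (σ : ι → Q) (i : ι) {q₁ q₂ : Q}
    (h : Strat β n q₁ q₂) (j : ι) :
    Strat β n (Function.update σ i q₁ j) (Function.update σ i q₂ j) := by
  rcases eq_or_ne j i with rfl | hji
  · simpa using h
  · simpa [hji] using Strat.refl n (σ j)

theorem of_eq_union {n : ℕ} {p₁ p₂ q₁ q₂ r₁ r₂ : Q} [DecidableEq ((A × Q) ⊕ V)]
    (hr₁ : β r₁ = β p₁ ∪ β p₂) (hr₂ : β r₂ = β q₁ ∪ β q₂)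
    (h₁ : Strat β n p₁ q₁) (h₂ : Strat β n p₂ q₂) : Strat β n r₁ r₂ := by
  rcases n with _ | n
  · trivial
  obtain ⟨out₁, fwd₁, bwd₁⟩ := h₁
  obtain ⟨out₂, fwd₂, bwd₂⟩ := h₂
  refine ⟨fun v => ?_, fun a q h => ?_, fun a q h => ?_⟩
  · simp only [hr₁, hr₂, Finset.mem_union, out₁ v, out₂ v]
  · rw [hr₁, Finset.mem_union] at h
    rw [hr₂]
    rcases h with h | h
    · obtain ⟨p, hp, hs⟩ := fwd₁ a q h
      exact ⟨p, Finset.mem_union_left _ hp, hs⟩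
    · obtain ⟨p, hp, hs⟩ := fwd₂ a q h
      exact ⟨p, Finset.mem_union_right _ hp, hs⟩
  · rw [hr₂, Finset.mem_union] at h
    rw [hr₁]
    rcases h with h | h
    · obtain ⟨p, hp, hs⟩ := bwd₁ a q h
      exact ⟨p, Finset.mem_union_left _ hp, hs⟩
    · obtain ⟨p, hp, hs⟩ := bwd₂ a q h
      exact ⟨p, Finset.mem_union_right _ hp, hs⟩

theorem succ_of_simulates {n : ℕ} {q₁ q₂ : Q}
    (hout : ∀ v : V, Sum.inr v ∈ β q₁ ↔ Sum.inr v ∈ β q₂)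
    (hfwd : ∀ (a : A) (q₁' : Q), Sum.inl (a, q₁') ∈ β q₁ →
      ∃ q₂', Sum.inl (a, q₂') ∈ β q₂ ∧ Strat β n q₁' q₂')
    (hbwd : ∀ (a : A) (q₂' : Q), Sum.inl (a, q₂') ∈ β q₂ →
      ∃ q₁', Sum.inl (a, q₁') ∈ β q₁ ∧ Strat β n q₂' q₁') :
    Strat β (n + 1) q₁ q₂ := by
  refine ⟨hout, hfwd, fun a q₂' h => ?_⟩
  obtain ⟨q₁', hq₁', hs⟩ := hbwd a q₂' h
  exact ⟨q₁', hq₁', hs.symm⟩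

end Strat

theorem le_hSup {Y : Type*} {s : Finset Y} {f : Y → ℝ} {y : Y} (hy : y ∈ s) :
    f y ≤ hSup s f := by
  rw [hSup, dif_pos ⟨y, hy⟩]
  exact Finset.le_sup' f hy

theorem hSup_le {Y : Type*} {s : Finset Y} {f : Y → ℝ} {c : ℝ} (hc : 0 ≤ c)
    (h : ∀ y ∈ s, f y ≤ c) : hSup s f ≤ c := by
  unfold hSup
  split
  · exact Finset.sup'_le _ _ h
  · exact hc

theorem hSup_nonneg {Y : Type*} {s : Finset Y} {f : Y → ℝ} (h : ∀ y ∈ s, 0 ≤ f y) :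
    0 ≤ hSup s f := by
  obtain rfl | ⟨y, hy⟩ := s.eq_empty_or_nonempty
  · simp [hSup]
  · exact (h y hy).trans (le_hSup hy)

theorem hInf_le {Y : Type*} {s : Finset Y} {f : Y → ℝ} {y : Y} (hy : y ∈ s) :
    hInf s f ≤ f y := by
  rw [hInf, dif_pos ⟨y, hy⟩]
  exact Finset.inf'_le f hy

theorem le_hInf {Y : Type*} {s : Finset Y} {f : Y → ℝ} {c : ℝ} (hc : c ≤ 1)
    (h : ∀ y ∈ s, c ≤ f y) : c ≤ hInf s f := by
  unfold hInf
  split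
  · exact Finset.le_inf' _ _ h
  · exact hc

theorem hInf_le_one {Y : Type*} {s : Finset Y} {f : Y → ℝ} (h : ∀ y ∈ s, f y ≤ 1) :
    hInf s f ≤ 1 := by
  obtain rfl | ⟨y, hy⟩ := s.eq_empty_or_nonempty
  · simp [hInf]
  · exact (hInf_le hy).trans (h y hy)

theorem hausdorffDist_nonneg {X : Type*} {d : X → X → ℝ} (hd : ∀ x y, 0 ≤ d x y)
    (s t : Finset X) : 0 ≤ hausdorffDist d s t :=
  (hSup_nonneg fun _ _ => le_hInf zero_le_one fun _ _ => hd _ _).trans (le_max_left _ _)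

theorem hausdorffDist_le_one {X : Type*} {d : X → X → ℝ} (hd : ∀ x y, d x y ≤ 1)
    (s t : Finset X) : hausdorffDist d s t ≤ 1 :=
  max_le (hSup_le zero_le_one fun _ _ => hInf_le_one fun _ _ => hd _ _)
    (hSup_le zero_le_one fun _ _ => hInf_le_one fun _ _ => hd _ _)

theorem hausdorffDist_comm {X : Type*} (d : X → X → ℝ) (s t : Finset X) :
    hausdorffDist d s t = hausdorffDist d t s :=
  max_comm _ _

section distLift

variable {X : Type*} {d : X → X → ℝ}

@[simp]
theorem distLift_inl_self (a : A) (x y : X) :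
    distLift (V := V) d (inl (a, x)) (inl (a, y)) = 1 / 2 * d x y := by
  simp [distLift]

@[simp]
theorem distLift_inr_self (v : V) : distLift (A := A) d (inr v) (inr v) = 0 := by
  simp [distLift]

theorem distLift_nonneg (hd : ∀ x y, 0 ≤ d x y) (m m' : (A × X) ⊕ V) :
    0 ≤ distLift d m m' := by
  rcases m with ⟨a, x⟩ | v <;> rcases m' with ⟨b, y⟩ | w <;> simp only [distLift]
  · split_ifs <;> linarith [hd x y]
  all_goals (try split_ifs) <;> norm_num

theorem distLift_le_one (hd : ∀ x y, d x y ≤ 1) (m m' : (A × X) ⊕ V) :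
    distLift d m m' ≤ 1 := by
  rcases m with ⟨a, x⟩ | v <;> rcases m' with ⟨b, y⟩ | w <;> simp only [distLift]
  · split_ifs <;> linarith [hd x y]
  all_goals (try split_ifs) <;> norm_num

theorem one_le_distLift_inr {v : V} {m : (A × X) ⊕ V} (hm : m ≠ inr v) :
    1 ≤ distLift d (inr v) m := by
  rcases m with ⟨b, y⟩ | w
  · simp [distLift]
  · simp [distLift, Ne.symm (inr_injective.ne_iff.mp hm)]

theorem le_distLift_inl {c : ℝ} (hc : c ≤ 1) {a : A} {x : X} {m : (A × X) ⊕ V}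
    (h : ∀ y, m = inl (a, y) → c ≤ 1 / 2 * d x y) : c ≤ distLift d (inl (a, x)) m := by
  rcases m with ⟨b, y⟩ | w
  · by_cases hab : a = b
    · subst hab
      simpa using h y rfl
    · simpa [distLift, hab] using hc
  · simpa [distLift] using hc

end distLift

open Classical in
noncomputable def stratDist (β : Q → Finset ((A × Q) ⊕ V)) (q₁ q₂ : Q) : ℝ :=
  ⨅ n : ℕ, if Strat β n q₁ q₂ then (1 / 2 : ℝ) ^ n else 1

open Classical in
theorem stratDist_le_ite (n : ℕ) (q₁ q₂ : Q) :
    stratDist β q₁ q₂ ≤ if Strat β n q₁ q₂ then (1 / 2 : ℝ) ^ n else 1 := by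
  refine ciInf_le ⟨0, ?_⟩ n
  rintro _ ⟨k, rfl⟩
  dsimp only
  split_ifs <;> positivity

theorem stratDist_le_pow {n : ℕ} {q₁ q₂ : Q} (h : Strat β n q₁ q₂) :
    stratDist β q₁ q₂ ≤ (1 / 2 : ℝ) ^ n := by
  simpa [h] using stratDist_le_ite (β := β) n q₁ q₂

theorem pow_le_stratDist {n : ℕ} {q₁ q₂ : Q} (h : ¬ Strat β (n + 1) q₁ q₂) :
    (1 / 2 : ℝ) ^ n ≤ stratDist β q₁ q₂ := by
  refine le_ciInf fun m => ?_
  split_ifs with hm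
  · have hmn : m ≤ n := by
      by_contra hlt
      exact h (hm.of_le (by omega))
    exact pow_le_pow_of_le_one (by norm_num) (by norm_num) hmn
  · exact pow_le_one₀ (by norm_num) (by norm_num)

theorem stratDist_le_of {q₁ q₂ : Q} {r : ℝ} (hr : 0 ≤ r)
    (h : ∀ n, ¬ Strat β (n + 1) q₁ q₂ → (1 / 2 : ℝ) ^ n ≤ r) : stratDist β q₁ q₂ ≤ r := by
  by_cases hall : ∀ n, Strat β (n + 1) q₁ q₂
  · refine le_of_forall_pos_lt_add fun ε hε => ?_
    obtain ⟨n, hn⟩ := exists_pow_lt_of_lt_one hε (by norm_num : (1 / 2 : ℝ) < 1)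
    linarith [stratDist_le_pow ((hall n).of_le n.le_succ)]
  · push Not at hall
    classical
    let M := Nat.find hall
    have hM : Strat β M q₁ q₂ := by
      rcases hM : M with _ | k
      · trivial
      · exact not_not.mp (Nat.find_min hall (show k < M by omega))
    exact (stratDist_le_pow hM).trans (h M (Nat.find_spec hall))

open Classical in
theorem stratDist_nonneg (q₁ q₂ : Q) : 0 ≤ stratDist β q₁ q₂ :=
  le_ciInf fun n => by split_ifs <;> positivity

open Classical in
theorem stratDist_isBPMet : IsBPMet (stratDist β) where
  nonneg := stratDist_nonneg
  le_one _ _ := (stratDist_le_pow (n := 0) trivial).trans_eq (pow_zero _)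
  refl q := le_antisymm (stratDist_le_of le_rfl fun n h => absurd (Strat.refl _ q) h)
    (stratDist_nonneg q q)
  symm q₁ q₂ := by
    unfold stratDist
    congr 1
    funext n
    exact if_congr ⟨Strat.symm, Strat.symm⟩ rfl rfl
  triangle q₁ q₂ q₃ := by
    refine stratDist_le_of (add_nonneg (stratDist_nonneg _ _) (stratDist_nonneg _ _))
      fun n h => ?_
    by_cases h₁₂ : Strat β (n + 1) q₁ q₂
    · have h₂₃ : ¬ Strat β (n + 1) q₂ q₃ := fun h₂₃ => h (h₁₂.trans h₂₃)
      linarith [pow_le_stratDist h₂₃, stratDist_nonneg (β := β) q₁ q₂]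
    · linarith [pow_le_stratDist h₁₂, stratDist_nonneg (β := β) q₂ q₃]

/-- `h` says that `q₂` does not simulate `q₁` one step deep: this alone puts `c` below the
Hausdorff distance. -/
theorem le_phi_of_not_simulates {d : Q → Q → ℝ} {n : ℕ} {c : ℝ} (hc : c ≤ 1)
    (hstep : ∀ p q, ¬ Strat β n p q → c ≤ 1 / 2 * d p q) {q₁ q₂ : Q}
    (h : ¬ ((∀ v : V, inr v ∈ β q₁ → inr v ∈ β q₂) ∧
      ∀ (a : A) (q₁' : Q), inl (a, q₁') ∈ β q₁ →
        ∃ q₂', inl (a, q₂') ∈ β q₂ ∧ Strat β n q₁' q₂')) :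
    c ≤ Phi β d q₁ q₂ := by
  suffices ∃ m ∈ β q₁, ∀ m' ∈ β q₂, c ≤ distLift d m m' by
    obtain ⟨m, hm, hle⟩ := this
    exact (le_hInf hc hle).trans ((le_hSup (f := fun m => hInf (β q₂) (distLift d m)) hm).trans
      (le_max_left _ _))
  rw [not_and_or] at h
  push Not at h
  rcases h with ⟨v, hv₁, hv₂⟩ | ⟨a, q₁', hq₁', hno⟩
  · exact ⟨inr v, hv₁, fun m' hm' =>
      hc.trans (one_le_distLift_inr (by rintro rfl; exact hv₂ hm'))⟩
  · exact ⟨inl (a, q₁'), hq₁', fun m' hm' =>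
      le_distLift_inl hc fun q₂' h => hstep _ _ (hno q₂' (h ▸ hm'))⟩

theorem le_phi_of_not_strat_succ {d : Q → Q → ℝ} {n : ℕ} {c : ℝ} (hc : c ≤ 1)
    (hstep : ∀ p q, ¬ Strat β n p q → c ≤ 1 / 2 * d p q) {q₁ q₂ : Q}
    (h : ¬ Strat β (n + 1) q₁ q₂) : c ≤ Phi β d q₁ q₂ := by
  by_contra hlt
  have hlt' : ¬ c ≤ Phi β d q₂ q₁ := by rwa [Phi, hausdorffDist_comm]
  obtain ⟨hout₁, hfwd⟩ := not_not.mp (mt (le_phi_of_not_simulates hc hstep) hlt)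
  obtain ⟨hout₂, hbwd⟩ := not_not.mp (mt (le_phi_of_not_simulates hc hstep) hlt')
  refine h ⟨fun v => ⟨hout₁ v, hout₂ v⟩, hfwd, fun a q₂' hq₂' => ?_⟩
  obtain ⟨q₁', hq₁', hs⟩ := hbwd a q₂' hq₂'
  exact ⟨q₁', hq₁', hs.symm⟩

theorem phi_le_of_forall_exists {d : Q → Q → ℝ} {c : ℝ} (hc : 0 ≤ c) {q₁ q₂ : Q}
    (h₁₂ : ∀ m ∈ β q₁, ∃ m' ∈ β q₂, distLift d m m' ≤ c)
    (h₂₁ : ∀ m ∈ β q₂, ∃ m' ∈ β q₁, distLift d m m' ≤ c) : Phi β d q₁ q₂ ≤ c := by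
  refine max_le (hSup_le hc fun m hm => ?_) (hSup_le hc fun m hm => ?_)
  · obtain ⟨m', hm', hle⟩ := h₁₂ m hm
    exact (hInf_le hm').trans hle
  · obtain ⟨m', hm', hle⟩ := h₂₁ m hm
    exact (hInf_le hm').trans hle

theorem exists_distLift_stratDist_le {n : ℕ} {q₁ q₂ : Q} (h : Strat β (n + 1) q₁ q₂) :
    ∀ m ∈ β q₁, ∃ m' ∈ β q₂, distLift (stratDist β) m m' ≤ (1 / 2 : ℝ) ^ (n + 1) := by
  rintro (⟨a, q₁'⟩ | v) hm
  · obtain ⟨q₂', hq₂', hs⟩ := h.2.1 a q₁' hm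
    refine ⟨inl (a, q₂'), hq₂', ?_⟩
    rw [distLift_inl_self, pow_succ]
    linarith [stratDist_le_pow hs]
  · exact ⟨inr v, (h.1 v).mp hm, by simp⟩

theorem phi_stratDist_le_pow {n : ℕ} {q₁ q₂ : Q} (h : Strat β n q₁ q₂) :
    Phi β (stratDist β) q₁ q₂ ≤ (1 / 2 : ℝ) ^ n := by
  rcases n with _ | n
  · rw [pow_zero]
    exact hausdorffDist_le_one (distLift_le_one stratDist_isBPMet.le_one) _ _
  · exact phi_le_of_forall_exists (by positivity) (exists_distLift_stratDist_le h)
      (exists_distLift_stratDist_le h.symm)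

theorem pow_le_phi_of_not_strat_succ {d : Q → Q → ℝ} {n : ℕ}
    (hd : ∀ k < n, ∀ p q, ¬ Strat β (k + 1) p q → (1 / 2 : ℝ) ^ k ≤ d p q) {q₁ q₂ : Q}
    (h : ¬ Strat β (n + 1) q₁ q₂) : (1 / 2 : ℝ) ^ n ≤ Phi β d q₁ q₂ := by
  refine le_phi_of_not_strat_succ (pow_le_one₀ (by norm_num) (by norm_num)) (fun p q hpq => ?_) h
  rcases n with _ | k
  · exact absurd trivial hpq
  · have := hd k k.lt_succ_self p q hpq
    rw [pow_succ]
    linarith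

open Classical in
theorem phi_stratDist : Phi β (stratDist β) = stratDist β := by
  ext q₁ q₂
  refine le_antisymm (le_ciInf fun n => ?_) ?_
  · split_ifs with h
    · exact phi_stratDist_le_pow h
    · exact hausdorffDist_le_one (distLift_le_one stratDist_isBPMet.le_one) _ _
  · exact stratDist_le_of (hausdorffDist_nonneg (distLift_nonneg stratDist_nonneg) _ _)
      fun n => pow_le_phi_of_not_strat_succ fun k _ _ _ => pow_le_stratDist

theorem IsLfpDist.pow_le {bd : Q → Q → ℝ} (hbd : IsLfpDist β bd) {n : ℕ} {q₁ q₂ : Q}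
    (h : ¬ Strat β (n + 1) q₁ q₂) : (1 / 2 : ℝ) ^ n ≤ bd q₁ q₂ := by
  induction n using Nat.strong_induction_on generalizing q₁ q₂ with
  | _ n ih => simpa [hbd.2.1] using pow_le_phi_of_not_strat_succ (fun k hk _ _ => ih k hk) h

theorem IsLfpDist.eq_stratDist {bd : Q → Q → ℝ} (hbd : IsLfpDist β bd) : bd = stratDist β := by
  ext q₁ q₂
  exact le_antisymm (hbd.2.2 _ stratDist_isBPMet phi_stratDist q₁ q₂)
    (stratDist_le_of (hbd.1.nonneg q₁ q₂) fun _ => hbd.pow_le)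

theorem stratDist_le_stratDist {q₁ q₂ p₁ p₂ : Q}
    (h : ∀ n, Strat β n q₁ q₂ → Strat β n p₁ p₂) : stratDist β p₁ p₂ ≤ stratDist β q₁ q₂ :=
  stratDist_le_of (stratDist_nonneg q₁ q₂) fun _ hn => pow_le_stratDist (mt (h _) hn)

end Prechart

namespace Exp

open Sum Function

variable {A : Type*}

theorem freshVar_not_mem (s : Finset ℕ) : freshVar s ∉ s := fun h => by
  have := Finset.le_sup (f := id) h
  simp only [freshVar, id] at this
  omega

/-- The set `S` of the `μ` clause of `subst`: the free variables that `σ` brings under the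
binder. -/
def captureSet (σ : ℕ → Exp A) (v : ℕ) (e : Exp A) : Finset ℕ :=
  ((fv e).erase v).biUnion fun w => fv (σ w)

/-- The variable `v'` of the `μ` clause of `subst`. -/
def substBinder (σ : ℕ → Exp A) (v : ℕ) (e : Exp A) : ℕ :=
  if v ∈ captureSet σ v e then freshVar (captureSet σ v e) else v

theorem subst_mu (σ : ℕ → Exp A) (v : ℕ) (e : Exp A) :
    subst σ (.mu v e) =
      .mu (substBinder σ v e) (subst (update σ v (.var (substBinder σ v e))) e) := rfl

theorem substBinder_not_mem (σ : ℕ → Exp A) (v : ℕ) (e : Exp A) :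
    substBinder σ v e ∉ captureSet σ v e := by
  unfold substBinder
  split
  · exact freshVar_not_mem _
  · assumption

theorem not_mem_fv_of_not_mem_captureSet {σ : ℕ → Exp A} {v w u : ℕ} {e : Exp A}
    (hw : w ∉ captureSet σ v e) (hu : u ∈ fv e) (huv : u ≠ v) : w ∉ fv (σ u) := fun h =>
  hw (Finset.mem_biUnion.mpr ⟨u, Finset.mem_erase.mpr ⟨huv, hu⟩, h⟩)

theorem substBinder_not_mem_fv {σ : ℕ → Exp A} {v u : ℕ} {e : Exp A}
    (hu : u ∈ fv e) (huv : u ≠ v) : substBinder σ v e ∉ fv (σ u) :=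
  not_mem_fv_of_not_mem_captureSet (substBinder_not_mem σ v e) hu huv

theorem subst_congr {e : Exp A} {σ τ : ℕ → Exp A} (h : ∀ u ∈ fv e, σ u = τ u) :
    subst σ e = subst τ e := by
  induction e generalizing σ τ with
  | zero => rfl
  | var v => exact h v (by simp [fv])
  | act a e ih => exact congrArg (act a) (ih fun u hu => h u (by simpa [fv] using hu))
  | plus e f ihe ihf =>
    exact congrArg₂ plus (ihe fun u hu => h u (by simp [fv, hu]))
      (ihf fun u hu => h u (by simp [fv, hu]))
  | mu v e ih =>
    have hS : captureSet σ v e = captureSet τ v e :=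
      Finset.biUnion_congr rfl fun u hu => by rw [h u (by simpa [fv] using hu)]
    have hV : substBinder σ v e = substBinder τ v e := by rw [substBinder, substBinder, hS]
    rw [subst_mu, subst_mu, hV]
    refine congrArg _ (ih fun u hu => ?_)
    rcases eq_or_ne u v with rfl | huv
    · simp
    · rw [update_of_ne huv, update_of_ne huv]
      exact h u (by simp [fv, huv, hu])

theorem subst_var (e : Exp A) : subst var e = e := by
  induction e with
  | zero | var v => rfl
  | act a e ih => exact congrArg (act a) ih
  | plus e f ihe ihf => exact congrArg₂ plus ihe ihf
  | mu v e ih =>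
    have hV : substBinder (var (A := A)) v e = v := by
      simp [substBinder, captureSet, fv]
    rw [subst_mu, hV, update_eq_self, ih]

theorem subst_eq_self {e : Exp A} {σ : ℕ → Exp A} (h : ∀ u ∈ fv e, σ u = var u) :
    subst σ e = e := by
  rw [subst_congr h, subst_var]

theorem subst1_eq_self {e t : Exp A} {v : ℕ} (hv : v ∉ fv e) : subst1 e v t = e :=
  subst_eq_self fun _ hu => update_of_ne (by rintro rfl; exact hv hu) _ _

theorem fv_subst (e : Exp A) (σ : ℕ → Exp A) :
    fv (subst σ e) = (fv e).biUnion fun w => fv (σ w) := by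
  induction e generalizing σ with
  | zero => simp [fv, subst]
  | var v => simp [fv, subst]
  | act a e ih => simpa [fv, subst] using ih σ
  | plus e f ihe ihf => simp only [fv, subst, ihe, ihf, Finset.union_biUnion]
  | mu v e ih =>
    rw [subst_mu]
    set v' := substBinder σ v e
    simp only [fv, ih]
    ext u
    simp only [Finset.mem_erase, Finset.mem_biUnion]
    constructor
    · rintro ⟨huv', w, hw, hu⟩
      rcases eq_or_ne w v with rfl | hwv
      · simp [fv, huv'] at hu
      · rw [update_of_ne hwv] at hu
        exact ⟨w, ⟨hwv, hw⟩, hu⟩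
    · rintro ⟨w, ⟨hwv, hw⟩, hu⟩
      refine ⟨?_, w, hw, by rwa [update_of_ne hwv]⟩
      rintro rfl
      exact substBinder_not_mem_fv hw hwv hu

theorem captureSet_comp_subset (σ τ : ℕ → Exp A) (w : ℕ) (t : Exp A) :
    captureSet (fun u => subst τ (σ u)) w t ⊆
      captureSet τ (substBinder σ w t) (subst (update σ w (var (substBinder σ w t))) t) := by
  intro q hq
  obtain ⟨u, hu, hq⟩ := Finset.mem_biUnion.mp hq
  obtain ⟨huw, hut⟩ := Finset.mem_erase.mp hu
  rw [fv_subst] at hq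
  obtain ⟨p, hp, hq⟩ := Finset.mem_biUnion.mp hq
  refine Finset.mem_biUnion.mpr ⟨p, Finset.mem_erase.mpr ⟨?_, ?_⟩, hq⟩
  · rintro rfl
    exact substBinder_not_mem_fv hut huw hp
  · rw [fv_subst]
    exact Finset.mem_biUnion.mpr ⟨u, hut, by rwa [update_of_ne huw]⟩

end Exp

section Dest

open Exp Sum Function

variable {A : Type*} [DecidableEq A]

theorem inl_mem_dest_mu_iff {v : ℕ} {e : Exp A} {a : A} {x : Exp A} :
    inl (a, x) ∈ dest (.mu v e) ↔ ∃ e', inl (a, e') ∈ dest e ∧ x = subst1 e' v (.mu v e) := by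
  simp only [dest, Finset.mem_biUnion]
  constructor
  · rintro ⟨⟨b, e'⟩ | w, hm, h⟩
    · simp only [destStep, Finset.mem_singleton, inl.injEq, Prod.mk.injEq] at h
      obtain ⟨rfl, rfl⟩ := h
      exact ⟨e', hm, rfl⟩
    · simp only [destStep] at h
      split at h <;> simp at h
  · rintro ⟨e', he', rfl⟩
    exact ⟨inl (a, e'), he', by simp [destStep]⟩

theorem inr_mem_dest_mu_iff {v : ℕ} {e : Exp A} {u : ℕ} :
    inr u ∈ dest (.mu v e) ↔ inr u ∈ dest e ∧ u ≠ v := by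
  simp only [dest, Finset.mem_biUnion]
  constructor
  · rintro ⟨⟨b, e'⟩ | w, hm, h⟩
    · simp [destStep] at h
    · simp only [destStep] at h
      split at h
      · simp at h
      · simp only [Finset.mem_singleton, inr.injEq] at h
        subst h
        exact ⟨hm, by assumption⟩
  · rintro ⟨hu, huv⟩
    exact ⟨inr u, hu, by simp [destStep, huv]⟩

theorem mem_fv_of_inr_mem_dest {e : Exp A} {u : ℕ} (h : inr u ∈ dest e) : u ∈ fv e := by
  induction e with
  | zero => simp [dest] at h
  | var v => simpa [dest, fv] using h
  | act a e ih => simp [dest] at h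
  | plus e f ihe ihf =>
    simp only [dest, Finset.mem_union] at h
    exact Finset.mem_union.mpr (h.imp ihe ihf)
  | mu v e ih =>
    obtain ⟨hu, huv⟩ := inr_mem_dest_mu_iff.mp h
    exact Finset.mem_erase.mpr ⟨huv, ih hu⟩

theorem fv_subset_of_inl_mem_dest {e : Exp A} {a : A} {x : Exp A} (h : inl (a, x) ∈ dest e) :
    fv x ⊆ fv e := by
  induction e generalizing x with
  | zero | var _ => simp [dest] at h
  | act b e ih =>
    simp only [dest, Finset.mem_singleton, inl.injEq, Prod.mk.injEq] at h
    rw [h.2]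
    rfl
  | plus e f ihe ihf =>
    simp only [dest, Finset.mem_union] at h
    rcases h with h | h
    · exact (ihe h).trans Finset.subset_union_left
    · exact (ihf h).trans Finset.subset_union_right
  | mu v e ih =>
    obtain ⟨e', he', rfl⟩ := inl_mem_dest_mu_iff.mp h
    intro u hu
    rw [subst1, fv_subst, Finset.mem_biUnion] at hu
    obtain ⟨w, hw, hu⟩ := hu
    rcases eq_or_ne w v with rfl | hwv
    · rwa [update_self] at hu
    · rw [update_of_ne hwv, fv, Finset.mem_singleton] at hu
      subst hu
      exact Finset.mem_erase.mpr ⟨hwv, ih he' hw⟩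

theorem inr_mem_dest_subst_iff {e : Exp A} {σ : ℕ → Exp A} {u : ℕ} :
    inr u ∈ dest (subst σ e) ↔ ∃ w, inr w ∈ dest e ∧ inr u ∈ dest (σ w) := by
  induction e generalizing σ with
  | zero => simp [dest, subst]
  | var v => simp [dest, subst]
  | act a e ih => simp [dest, subst]
  | plus e f ihe ihf =>
    simp only [subst, dest, Finset.mem_union, ihe, ihf]
    constructor
    · rintro (⟨w, hw, hu⟩ | ⟨w, hw, hu⟩)
      · exact ⟨w, Or.inl hw, hu⟩
      · exact ⟨w, Or.inr hw, hu⟩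
    · rintro ⟨w, hw | hw, hu⟩
      · exact Or.inl ⟨w, hw, hu⟩
      · exact Or.inr ⟨w, hw, hu⟩
  | mu v e ih =>
    rw [subst_mu, inr_mem_dest_mu_iff, ih]
    constructor
    · rintro ⟨⟨w, hw, hu⟩, huv'⟩
      rcases eq_or_ne w v with rfl | hwv
      · simp [dest, huv'] at hu
      · rw [update_of_ne hwv] at hu
        exact ⟨w, inr_mem_dest_mu_iff.mpr ⟨hw, hwv⟩, hu⟩
    · rintro ⟨w, hw, hu⟩
      obtain ⟨hw, hwv⟩ := inr_mem_dest_mu_iff.mp hw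
      refine ⟨⟨w, hw, by rwa [update_of_ne hwv]⟩, ?_⟩
      rintro rfl
      exact substBinder_not_mem_fv (mem_fv_of_inr_mem_dest hw) hwv (mem_fv_of_inr_mem_dest hu)

theorem inl_mem_dest_subst_of_inr_mem_dest {e : Exp A} {σ : ℕ → Exp A} {w : ℕ} {a : A}
    {x : Exp A} (hw : inr w ∈ dest e) (hx : inl (a, x) ∈ dest (σ w)) :
    inl (a, x) ∈ dest (subst σ e) := by
  induction e generalizing σ with
  | zero | act _ _ _ => simp [dest] at hw
  | var v =>
    simp only [dest, Finset.mem_singleton, inr.injEq] at hw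
    subst hw
    exact hx
  | plus e f ihe ihf =>
    simp only [dest, Finset.mem_union, subst] at hw ⊢
    exact hw.imp (ihe · hx) (ihf · hx)
  | mu v e ih =>
    obtain ⟨hw, hwv⟩ := inr_mem_dest_mu_iff.mp hw
    rw [subst_mu, inl_mem_dest_mu_iff]
    refine ⟨x, ih hw (by rwa [update_of_ne hwv]), (subst_eq_self fun u hu => ?_).symm⟩
    refine update_of_ne ?_ _ _
    rintro rfl
    exact substBinder_not_mem_fv (mem_fv_of_inr_mem_dest hw) hwv
      (fv_subset_of_inl_mem_dest hx hu)

end Dest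

section Congruence

open Exp Sum Function

variable {A : Type*} [DecidableEq A]

theorem Strat.plus {n : ℕ} {x₁ y₁ x₂ y₂ : Exp A} (h₁ : Strat dest n x₁ y₁)
    (h₂ : Strat dest n x₂ y₂) : Strat dest n (x₁.plus x₂) (y₁.plus y₂) :=
  Strat.of_eq_union rfl rfl h₁ h₂

theorem Strat.act {n : ℕ} (a : A) {x y : Exp A} (h : Strat dest n x y) :
    Strat dest (n + 1) (.act a x) (.act a y) := by
  refine ⟨fun v => by simp [dest], fun b x' hx' => ?_, fun b y' hy' => ?_⟩
  · simp only [dest, Finset.mem_singleton, inl.injEq, Prod.mk.injEq] at hx'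
    obtain ⟨rfl, rfl⟩ := hx'
    exact ⟨y, by simp [dest], h⟩
  · simp only [dest, Finset.mem_singleton, inl.injEq, Prod.mk.injEq] at hy'
    obtain ⟨rfl, rfl⟩ := hy'
    exact ⟨x, by simp [dest], h⟩

variable (A) in
def SubstCongrAt (n : ℕ) : Prop :=
  ∀ (e f : Exp A) (σ τ : ℕ → Exp A), Strat dest n e f →
    (∀ w, Strat dest n (σ w) (τ w)) → Strat dest n (subst σ e) (subst τ f)

variable (A) in
def SubstCompAt (n : ℕ) : Prop :=
  ∀ (e : Exp A) (σ τ : ℕ → Exp A),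
    Strat dest n (subst τ (subst σ e)) (subst (fun w => subst τ (σ w)) e)

variable (A) in
/-- Renaming the binder that `subst ρ` gives to `μw.t` to any other admissible variable. -/
def MuRenameAt (n : ℕ) : Prop :=
  ∀ (t : Exp A) (w : ℕ) (ρ : ℕ → Exp A) (b c : ℕ), b ∉ captureSet ρ w t →
    c ∉ captureSet ρ w t →
    Strat dest n (.mu b (subst (update ρ w (.var b)) t)) (.mu c (subst (update ρ w (.var c)) t))

variable (A) in
def MuCongrAt (n : ℕ) : Prop :=
  ∀ (e f : Exp A) (v : ℕ), Strat dest n e f → Strat dest n (.mu v e) (.mu v f)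

variable {n : ℕ}

theorem strat_subst_subst (hcomp : SubstCompAt A n) {e : Exp A} {σ τ ρ : ℕ → Exp A}
    (h : ∀ u ∈ fv e, subst τ (σ u) = ρ u) : Strat dest n (subst τ (subst σ e)) (subst ρ e) :=
  subst_congr h ▸ hcomp e σ τ

theorem strat_subst_subst1 (hcomp : SubstCompAt A n) (e t : Exp A) (w : ℕ)
    (σ : ℕ → Exp A) : Strat dest n (subst σ (subst1 e w t)) (subst (update σ w (subst σ t)) e) :=
  strat_subst_subst hcomp fun u _ => by rcases eq_or_ne u w with rfl | huw <;> simp [*, subst]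

theorem strat_subst1_subst_update (hcomp : SubstCompAt A n) {σ : ℕ → Exp A} {w d : ℕ}
    {t e : Exp A} (hd : d ∉ captureSet σ w t) (hfv : fv e ⊆ fv t) (M : Exp A) :
    Strat dest n (subst1 (subst (update σ w (.var d)) e) d M) (subst (update σ w M) e) := by
  refine strat_subst_subst hcomp fun u hu => ?_
  rcases eq_or_ne u w with rfl | huw
  · simp [subst]
  · rw [update_of_ne huw, update_of_ne huw]
    exact subst_eq_self fun p hp =>
      update_of_ne (by rintro rfl; exact not_mem_fv_of_not_mem_captureSet hd (hfv hu) huw hp) _ _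

theorem strat_subst1_of_strat_subst (hcongr : SubstCongrAt A n) (hcomp : SubstCompAt A n)
    {σ : ℕ → Exp A} {w d : ℕ} {t t' x : Exp A} (hd : d ∉ captureSet σ w t) (hfv : fv t' ⊆ fv t)
    (hx : Strat dest n x (subst (update σ w (.var d)) t')) (M : Exp A) :
    Strat dest n (subst1 x d M) (subst (update σ w M) t') :=
  (hcongr _ _ _ _ hx fun _ => Strat.refl n _).trans (strat_subst1_subst_update hcomp hd hfv M)

/-- Unfolding `(μw.t)[σ]` along a transition `t →a t'` agrees, up to `~⁽ⁿ⁾`, with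
substituting `σ` into the unfolding `t'[μw.t/w]`. -/
theorem strat_unfold_subst_mu (hcongr : SubstCongrAt A n) (hcomp : SubstCompAt A n)
    {t t' x : Exp A} {w : ℕ} {σ : ℕ → Exp A} (hfv : fv t' ⊆ fv t)
    (hx : Strat dest n x (subst (update σ w (.var (substBinder σ w t))) t')) :
    Strat dest n (subst1 x (substBinder σ w t) (subst σ (.mu w t)))
      (subst σ (subst1 t' w (.mu w t))) :=
  (strat_subst1_of_strat_subst hcongr hcomp (substBinder_not_mem σ w t) hfv hx _).trans
    (strat_subst_subst1 hcomp t' (.mu w t) w σ).symm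

theorem inl_mem_dest_subst_cases (hcongr : SubstCongrAt A n) (hcomp : SubstCompAt A n)
    {e : Exp A} {σ : ℕ → Exp A} {a : A} {x : Exp A} (hx : inl (a, x) ∈ dest (subst σ e)) :
    (∃ e', inl (a, e') ∈ dest e ∧ Strat dest n x (subst σ e')) ∨
      ∃ w, inr w ∈ dest e ∧ inl (a, x) ∈ dest (σ w) := by
  induction e generalizing σ x with
  | zero => simp [subst, dest] at hx
  | var v => exact Or.inr ⟨v, by simp [dest], hx⟩
  | act b t ih =>
    simp only [subst, dest, Finset.mem_singleton, inl.injEq, Prod.mk.injEq] at hx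
    obtain ⟨rfl, rfl⟩ := hx
    exact Or.inl ⟨t, by simp [dest], Strat.refl n _⟩
  | plus t₁ t₂ ih₁ ih₂ =>
    simp only [subst, dest, Finset.mem_union] at hx ⊢
    rcases hx with hx | hx
    · rcases ih₁ hx with ⟨t', ht', hs⟩ | ⟨u, hu, hxu⟩
      · exact Or.inl ⟨t', Or.inl ht', hs⟩
      · exact Or.inr ⟨u, Or.inl hu, hxu⟩
    · rcases ih₂ hx with ⟨t', ht', hs⟩ | ⟨u, hu, hxu⟩
      · exact Or.inl ⟨t', Or.inr ht', hs⟩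
      · exact Or.inr ⟨u, Or.inr hu, hxu⟩
  | mu w t ih =>
    rw [subst_mu, inl_mem_dest_mu_iff] at hx
    obtain ⟨x₀, hx₀, rfl⟩ := hx
    rcases ih hx₀ with ⟨t', ht', hs⟩ | ⟨u, hu, hxu⟩
    · exact Or.inl ⟨subst1 t' w (.mu w t), inl_mem_dest_mu_iff.mpr ⟨t', ht', rfl⟩,
        strat_unfold_subst_mu hcongr hcomp (fv_subset_of_inl_mem_dest ht') hs⟩
    · have huw : u ≠ w := by
        rintro rfl
        simp [dest] at hxu
      rw [update_of_ne huw] at hxu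
      rw [subst1_eq_self fun h => substBinder_not_mem_fv (mem_fv_of_inr_mem_dest hu) huw
        (fv_subset_of_inl_mem_dest hxu h)]
      exact Or.inr ⟨u, inr_mem_dest_mu_iff.mpr ⟨hu, huw⟩, hxu⟩

theorem exists_inl_mem_dest_subst (hcongr : SubstCongrAt A n) (hcomp : SubstCompAt A n)
    {e : Exp A} (σ : ℕ → Exp A) {a : A} {e' : Exp A} (he' : inl (a, e') ∈ dest e) :
    ∃ x, inl (a, x) ∈ dest (subst σ e) ∧ Strat dest n x (subst σ e') := by
  induction e generalizing σ e' with
  | zero | var _ => simp [dest] at he'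
  | act b t ih =>
    simp only [dest, Finset.mem_singleton, inl.injEq, Prod.mk.injEq] at he'
    obtain ⟨rfl, rfl⟩ := he'
    exact ⟨subst σ e', by simp [subst, dest], Strat.refl n _⟩
  | plus t₁ t₂ ih₁ ih₂ =>
    simp only [subst, dest, Finset.mem_union] at he' ⊢
    rcases he' with he' | he'
    · obtain ⟨x, hx, hs⟩ := ih₁ σ he'
      exact ⟨x, Or.inl hx, hs⟩
    · obtain ⟨x, hx, hs⟩ := ih₂ σ he'
      exact ⟨x, Or.inr hx, hs⟩
  | mu w t ih =>
    obtain ⟨t', ht', rfl⟩ := inl_mem_dest_mu_iff.mp he'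
    obtain ⟨x₀, hx₀, hs⟩ := ih (update σ w (.var (substBinder σ w t))) ht'
    exact ⟨_, by rw [subst_mu, inl_mem_dest_mu_iff]; exact ⟨x₀, hx₀, rfl⟩,
      strat_unfold_subst_mu hcongr hcomp (fv_subset_of_inl_mem_dest ht') hs⟩

theorem muCongrAt_succ (hcongr : SubstCongrAt A n) (hmu : MuCongrAt A n) :
    MuCongrAt A (n + 1) := by
  have hfwd : ∀ {e f : Exp A} {v : ℕ}, Strat dest (n + 1) e f → ∀ (a : A) (z : Exp A),
      inl (a, z) ∈ dest (.mu v e) → ∃ z', inl (a, z') ∈ dest (.mu v f) ∧ Strat dest n z z' := by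
    intro e f v h a z hz
    obtain ⟨e', he', rfl⟩ := inl_mem_dest_mu_iff.mp hz
    obtain ⟨f', hf', hs⟩ := h.2.1 a e' he'
    exact ⟨_, inl_mem_dest_mu_iff.mpr ⟨f', hf', rfl⟩,
      hcongr _ _ _ _ hs (Strat.update var v (hmu e f v (h.of_le n.le_succ)))⟩
  intro e f v h
  exact Strat.succ_of_simulates (fun u => by simp only [inr_mem_dest_mu_iff, h.1 u])
    (hfwd h) (hfwd h.symm)

theorem substCongrAt_succ (hcongr : SubstCongrAt A n) (hcomp : SubstCompAt A n) :
    SubstCongrAt A (n + 1) := by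
  have hfwd : ∀ {e f : Exp A} {σ τ : ℕ → Exp A}, Strat dest (n + 1) e f →
      (∀ w, Strat dest (n + 1) (σ w) (τ w)) → ∀ (a : A) (x : Exp A),
      inl (a, x) ∈ dest (subst σ e) → ∃ y, inl (a, y) ∈ dest (subst τ f) ∧ Strat dest n x y := by
    intro e f σ τ hef hστ a x hx
    rcases inl_mem_dest_subst_cases hcongr hcomp hx with ⟨e', he', hs⟩ | ⟨w, hw, hxw⟩
    · obtain ⟨f', hf', hs'⟩ := hef.2.1 a e' he'
      obtain ⟨y, hy, hys⟩ := exists_inl_mem_dest_subst hcongr hcomp τ hf'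
      exact ⟨y, hy, (hs.trans (hcongr _ _ _ _ hs' fun w => (hστ w).of_le n.le_succ)).trans
        hys.symm⟩
    · obtain ⟨y, hy, hys⟩ := (hστ w).2.1 a x hxw
      exact ⟨y, inl_mem_dest_subst_of_inr_mem_dest ((hef.1 w).mp hw) hy, hys⟩
  intro e f σ τ hef hστ
  refine Strat.succ_of_simulates (fun u => ?_) (hfwd hef hστ)
    (hfwd hef.symm fun w => (hστ w).symm)
  simp only [inr_mem_dest_subst_iff, hef.1, (hστ _).1]

theorem inr_mem_dest_mu_subst_iff {t : Exp A} {w b : ℕ} {ρ : ℕ → Exp A}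
    (hb : b ∉ captureSet ρ w t) {u : ℕ} :
    inr u ∈ dest (.mu b (subst (update ρ w (.var b)) t)) ↔
      ∃ p, inr p ∈ dest t ∧ p ≠ w ∧ inr u ∈ dest (ρ p) := by
  rw [inr_mem_dest_mu_iff, inr_mem_dest_subst_iff]
  constructor
  · rintro ⟨⟨p, hp, hu⟩, hub⟩
    rcases eq_or_ne p w with rfl | hpw
    · simp [dest, hub] at hu
    · rw [update_of_ne hpw] at hu
      exact ⟨p, hp, hpw, hu⟩
  · rintro ⟨p, hp, hpw, hu⟩
    refine ⟨⟨p, hp, by rwa [update_of_ne hpw]⟩, ?_⟩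
    rintro rfl
    exact not_mem_fv_of_not_mem_captureSet hb (mem_fv_of_inr_mem_dest hp) hpw
      (mem_fv_of_inr_mem_dest hu)

theorem muRenameAt_succ (hcongr : SubstCongrAt A n) (hcomp : SubstCompAt A n)
    (hren : MuRenameAt A n) : MuRenameAt A (n + 1) := by
  have hfwd : ∀ {t : Exp A} {w : ℕ} {ρ : ℕ → Exp A} {b c : ℕ}, b ∉ captureSet ρ w t →
      c ∉ captureSet ρ w t → ∀ (a : A) (z : Exp A),
      inl (a, z) ∈ dest (.mu b (subst (update ρ w (.var b)) t)) →
      ∃ z', inl (a, z') ∈ dest (.mu c (subst (update ρ w (.var c)) t)) ∧ Strat dest n z z' := by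
    intro t w ρ b c hb hc a z hz
    obtain ⟨x, hx, rfl⟩ := inl_mem_dest_mu_iff.mp hz
    rcases inl_mem_dest_subst_cases hcongr hcomp hx with ⟨t', ht', hs⟩ | ⟨u, hu, hxu⟩
    · have hfv := fv_subset_of_inl_mem_dest ht'
      obtain ⟨y, hy, hys⟩ := exists_inl_mem_dest_subst hcongr hcomp (update ρ w (.var c)) ht'
      refine ⟨_, inl_mem_dest_mu_iff.mpr ⟨y, hy, rfl⟩, ?_⟩
      refine ((strat_subst1_of_strat_subst hcongr hcomp hb hfv hs _).trans ?_).trans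
        (strat_subst1_of_strat_subst hcongr hcomp hc hfv hys _).symm
      exact hcongr _ _ _ _ (Strat.refl n t') (Strat.update ρ w (hren t w ρ b c hb hc))
    · have huw : u ≠ w := by
        rintro rfl
        simp [dest] at hxu
      rw [update_of_ne huw] at hxu
      have hfresh : ∀ {d}, d ∉ captureSet ρ w t → d ∉ fv x := fun hd h =>
        not_mem_fv_of_not_mem_captureSet hd (mem_fv_of_inr_mem_dest hu) huw
          (fv_subset_of_inl_mem_dest hxu h)
      refine ⟨x, inl_mem_dest_mu_iff.mpr ⟨x, inl_mem_dest_subst_of_inr_mem_dest hu ?_,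
        (subst1_eq_self (hfresh hc)).symm⟩, ?_⟩
      · rwa [update_of_ne huw]
      · rw [subst1_eq_self (hfresh hb)]
        exact Strat.refl n x
  intro t w ρ b c hb hc
  exact Strat.succ_of_simulates
    (fun u => by rw [inr_mem_dest_mu_subst_iff hb, inr_mem_dest_mu_subst_iff hc])
    (hfwd hb hc) (hfwd hc hb)

theorem substCompAt_succ (hmu : MuCongrAt A (n + 1)) (hren : MuRenameAt A (n + 1)) :
    SubstCompAt A (n + 1) := by
  intro e
  induction e with
  | zero | var _ => exact fun _ _ => Strat.refl _ _
  | act a t ih => exact fun σ τ => ((ih σ τ).of_le n.le_succ).act a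
  | plus t₁ t₂ ih₁ ih₂ => exact fun σ τ => (ih₁ σ τ).plus (ih₂ σ τ)
  | mu w t ih =>
    intro σ τ
    set w₁ := substBinder σ w t
    set σ₁ := update σ w (.var w₁)
    set w₂ := substBinder τ w₁ (subst σ₁ t)
    set ρ : ℕ → Exp A := fun u => subst τ (σ u)
    have hρ : subst (fun u => subst (update τ w₁ (.var w₂)) (σ₁ u)) t =
        subst (update ρ w (.var w₂)) t := by
      refine subst_congr fun u hu => ?_
      rcases eq_or_ne u w with rfl | huw
      · simp [σ₁, subst]
      · simp only [σ₁, ρ, update_of_ne huw]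
        exact subst_congr fun p hp => update_of_ne
          (by rintro rfl; exact substBinder_not_mem_fv hu huw hp) _ _
    have hw₂ : w₂ ∉ captureSet ρ w t := fun h =>
      substBinder_not_mem τ w₁ _ (captureSet_comp_subset σ τ w t h)
    exact (hmu _ _ w₂ (hρ ▸ ih σ₁ (update τ w₁ (.var w₂)))).trans
      (hren t w ρ w₂ _ hw₂ (substBinder_not_mem ρ w t))

theorem Strat.mu {n : ℕ} {e f : Exp A} (v : ℕ) (h : Strat dest n e f) :
    Strat dest n (.mu v e) (.mu v f) := by
  have hall : ∀ n, SubstCongrAt A n ∧ SubstCompAt A n ∧ MuRenameAt A n ∧ MuCongrAt A n := by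
    intro n
    induction n with
    | zero => exact ⟨fun _ _ _ _ _ _ => trivial, fun _ _ _ => trivial,
        fun _ _ _ _ _ _ _ => trivial, fun _ _ _ _ => trivial⟩
    | succ n ih =>
      obtain ⟨hcongr, hcomp, hren, hmu⟩ := ih
      have hmu' := muCongrAt_succ hcongr hmu
      have hren' := muRenameAt_succ hcongr hcomp hren
      exact ⟨substCongrAt_succ hcongr hcomp, substCompAt_succ hmu' hren', hren', hmu'⟩
  exact (hall n).2.2.2 e f v h

end Congruence

/-- the recursion operator `μv` preserves each level of the stratification
of bisimilarity, and consequently it is nonexpansive for the behavioural distance `bd`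
(the least fixpoint of `Φ` for the prechart of Milner expressions). -/
theorem mu_strat_and_bd_nonexpansive {A : Type*} [DecidableEq A]
    (e f : Exp A) (v : ℕ) (bd : Exp A → Exp A → ℝ) (hbd : IsLfpDist dest bd) :
    (∀ n : ℕ, Strat dest n e f → Strat dest n (Exp.mu v e) (Exp.mu v f)) ∧
    bd (Exp.mu v e) (Exp.mu v f) ≤ bd e f := by
  refine ⟨fun n => Strat.mu v, ?_⟩
  rw [hbd.eq_stratDist]
  exact stratDist_le_stratDist fun n => Strat.mu v
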